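/- Let ρ be a qubit density matrix with Bloch vector r = (r_x, r_y, r_z) ∈ ℝ³, |r|² = r_x² + r_y² + r_z² ≤ 1, i.e. ρ = (1/2)·[[1 + r_z, r_x − i r_y], [r_x + i r_y, 1 − r_z]]. Then M_Re(ρ) = 1 − √( ( √((1 − |r|²)(1 − |r|² + r_y²)) + 1 + |r|² − r_y² ) / 2 ). -/

import Mathlib

/-! For a `2 × 2` positive semidefinite `M` with trace `t` and determinant `d`, Cayley–Hamilton
gives `(M + √d)² = (t + 2√d) M`, so `√M = (M + √d) / √(t + 2√d)` and `Tr √M = √(t + 2√d)`.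
Applied to `M = √ρ σ √ρ`, whose trace and determinant are those of `ρσ`, this yields
`F(ρ, σ) = √(Tr ρσ + 2 √det ρσ)`. For the Bloch state `ρ` of `r` and `σ = Re ρ`, the Bloch state
of `(r_x, 0, r_z)`, one has `Tr ρσ = (1 + r_x² + r_z²)/2` and
`det ρσ = (1 - |r|²)(1 - |r|² + r_y²)/16`. -/

open Matrix Complex ComplexOrder Classical

/-- The positive semidefinite square root of a matrix (junk value `0` if not PSD). -/
noncomputable def psqrt {n : Type*} [Fintype n] [DecidableEq n] (A : Matrix n n ℂ) :
    Matrix n n ℂ :=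
  if h : A.PosSemidef then
    (h.1.eigenvectorUnitary : Matrix n n ℂ) * diagonal ((↑) ∘ (Real.sqrt ∘ h.1.eigenvalues)) *
      (star h.1.eigenvectorUnitary : Matrix n n ℂ)
  else 0

/-- Entrywise complex conjugate of a matrix. -/
def mconj {m n : Type*} (A : Matrix m n ℂ) : Matrix m n ℂ := A.map (starRingEnd ℂ)

/-- Fidelity `F(ρ,σ) = Tr √(√ρ σ √ρ)`. -/
noncomputable def fidelity {n : Type*} [Fintype n] [DecidableEq n] (ρ σ : Matrix n n ℂ) : ℝ :=
  ((psqrt (psqrt ρ * σ * psqrt ρ)).trace).re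

/-- The real part state `Re(ρ) = (ρ + ρ*)/2`. -/
noncomputable def reState {n : Type*} (ρ : Matrix n n ℂ) : Matrix n n ℂ :=
  ((1 : ℂ)/2) • (ρ + mconj ρ)

/-- The imaginarity measure `M_Re(ρ) = 1 - F(ρ, Re(ρ))`. -/
noncomputable def MRe {n : Type*} [Fintype n] [DecidableEq n] (ρ : Matrix n n ℂ) : ℝ :=
  1 - fidelity ρ (reState ρ)

/-- A density matrix: positive semidefinite with trace 1. -/
def IsDensityMatrix {n : Type*} [Fintype n] (ρ : Matrix n n ℂ) : Prop :=
  ρ.PosSemidef ∧ ρ.trace = 1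

section psqrt

variable {n : Type*} [Fintype n] [DecidableEq n] {A B : Matrix n n ℂ}

open scoped MatrixOrder

lemma psqrt_eq_cfcSqrt (hA : A.PosSemidef) : psqrt A = CFC.sqrt A := by
  rw [CFC.sqrt_eq_cfc, cfc_nnreal_eq_real _ A hA.nonneg, hA.1.cfc_eq, psqrt, dif_pos hA]
  simp only [IsHermitian.cfc, Unitary.conjStarAlgAut_apply]
  congr
  funext i
  simp only [Real.coe_sqrt, Real.coe_toNNReal']
  rcases le_total 0 i with hi | hi
  · rw [max_eq_left hi]
  · rw [max_eq_right hi, Real.sqrt_zero, Real.sqrt_eq_zero'.mpr hi]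

lemma psqrt_mul_psqrt (hA : A.PosSemidef) : psqrt A * psqrt A = A := by
  rw [psqrt_eq_cfcSqrt hA]
  exact CFC.sqrt_mul_sqrt_self A hA.nonneg

lemma posSemidef_psqrt (hA : A.PosSemidef) : (psqrt A).PosSemidef := by
  rw [psqrt_eq_cfcSqrt hA]
  exact (CFC.sqrt_nonneg A).posSemidef

lemma psqrt_eq_of_mul_self (hA : A.PosSemidef) (hB : B.PosSemidef) (hBA : B * B = A) :
    psqrt A = B := by
  rw [psqrt_eq_cfcSqrt hA]
  exact CFC.sqrt_unique hBA hB.nonneg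

lemma psqrt_zero : psqrt (0 : Matrix n n ℂ) = 0 :=
  psqrt_eq_of_mul_self .zero .zero (zero_mul 0)

end psqrt

section FinTwo

variable {M : Matrix (Fin 2) (Fin 2) ℂ}

lemma Matrix.mul_self_eq_trace_smul_sub_det_smul_fin_two (M : Matrix (Fin 2) (Fin 2) ℂ) :
    M * M = M.trace • M - M.det • 1 := by
  have h := aeval_self_charpoly M
  rw [charpoly_fin_two] at h
  simp only [sq, map_add, Polynomial.aeval_sub, map_mul, Polynomial.aeval_X,
    Polynomial.aeval_C] at h
  rw [eq_sub_iff_add_eq, ← sub_eq_zero, ← h]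
  simp only [Algebra.smul_def, mul_one]
  abel

lemma Matrix.IsHermitian.posSemidef_of_trace_nonneg_of_det_nonneg_fin_two (hM : M.IsHermitian)
    (htr : 0 ≤ M.trace) (hdet : 0 ≤ M.det) : M.PosSemidef := by
  rw [hM.trace_eq_sum_eigenvalues, Fin.sum_univ_two, ← RCLike.ofReal_add,
    RCLike.ofReal_nonneg] at htr
  rw [hM.det_eq_prod_eigenvalues, Fin.prod_univ_two, ← RCLike.ofReal_mul,
    RCLike.ofReal_nonneg] at hdet
  rw [hM.posSemidef_iff_eigenvalues_nonneg, Pi.le_def, Fin.forall_fin_two, Pi.zero_apply,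
    Pi.zero_apply]
  constructor <;> nlinarith

lemma psqrt_eq_smul_fin_two (hM : M.PosSemidef) {t d : ℝ} (ht : M.trace = t) (hd : M.det = d)
    (hd0 : 0 ≤ d) (hs : 0 < t + 2 * √d) :
    psqrt M = (√(t + 2 * √d))⁻¹ • (M + √d • 1) := by
  have hB : ((√(t + 2 * √d))⁻¹ • (M + √d • 1)).PosSemidef :=
    (hM.add (PosSemidef.one.smul (Real.sqrt_nonneg d))).smul (inv_nonneg.2 (Real.sqrt_nonneg _))
  refine psqrt_eq_of_mul_self hM hB ?_
  have hCH : M * M = t • M - d • 1 := by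
    rw [mul_self_eq_trace_smul_sub_det_smul_fin_two, ht, hd, Complex.coe_smul, Complex.coe_smul]
  have hsq : (M + √d • 1) * (M + √d • 1) = (t + 2 * √d) • M := by
    simp only [add_mul, mul_add, smul_mul_assoc, mul_smul_comm, one_mul, mul_one, hCH]
    match_scalars <;> linarith [Real.mul_self_sqrt hd0]
  rw [smul_mul_smul_comm, hsq, smul_smul, ← sq, inv_pow, Real.sq_sqrt hs.le,
    inv_mul_cancel₀ hs.ne', one_smul]

lemma re_trace_psqrt_fin_two (hM : M.PosSemidef) :
    (psqrt M).trace.re = √(M.trace.re + 2 * √M.det.re) := by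
  obtain ⟨t, ht⟩ : ∃ t : ℝ, M.trace = t :=
    ⟨_, eq_re_of_ofReal_le (by rw [ofReal_zero]; exact hM.trace_nonneg)⟩
  obtain ⟨d, hd⟩ : ∃ d : ℝ, M.det = d :=
    ⟨_, eq_re_of_ofReal_le (by rw [ofReal_zero]; exact hM.det_nonneg)⟩
  have ht0 : 0 ≤ t := by simpa [ht] using hM.trace_nonneg
  have hd0 : 0 ≤ d := by simpa [hd] using hM.det_nonneg
  rw [ht, hd, ofReal_re, ofReal_re]
  rcases (add_nonneg ht0 (mul_nonneg zero_le_two (Real.sqrt_nonneg d))).eq_or_lt with hs | hs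
  · have hM0 : M = 0 :=
      hM.trace_eq_zero_iff.1 (by rw [ht]; norm_cast; linarith [Real.sqrt_nonneg d])
    rw [hM0, psqrt_zero, ← hs]
    simp
  · have hs' : (√(t + 2 * √d))⁻¹ * (t + 2 * √d) = √(t + 2 * √d) := by
      rw [inv_mul_eq_iff_eq_mul₀ (Real.sqrt_pos.2 hs).ne', Real.mul_self_sqrt hs.le]
    rw [psqrt_eq_smul_fin_two hM ht hd hd0 hs, trace_smul, trace_add, trace_smul, trace_one, ht]
    simp only [Fintype.card_fin, smul_re, add_re, ofReal_re, Nat.cast_ofNat, re_ofNat,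
      smul_eq_mul]
    rw [mul_comm (√d), hs']

theorem fidelity_fin_two {ρ σ : Matrix (Fin 2) (Fin 2) ℂ} (hρ : ρ.PosSemidef) (hσ : σ.PosSemidef) :
    fidelity ρ σ = √((ρ * σ).trace.re + 2 * √(ρ * σ).det.re) := by
  have hM : (psqrt ρ * σ * psqrt ρ).PosSemidef := by
    simpa only [(posSemidef_psqrt hρ).1.eq] using hσ.conjTranspose_mul_mul_same (psqrt ρ)
  rw [fidelity, re_trace_psqrt_fin_two hM, trace_mul_cycle, psqrt_mul_psqrt hρ, det_mul_comm,
    ← mul_assoc, psqrt_mul_psqrt hρ]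

end FinTwo

noncomputable def blochState (x y z : ℝ) : Matrix (Fin 2) (Fin 2) ℂ :=
  ((1:ℂ)/2) • !![1 + (z:ℂ), (x:ℂ) - Complex.I * (y:ℂ); (x:ℂ) + Complex.I * (y:ℂ), 1 - (z:ℂ)]

section Bloch

variable (x y z : ℝ)

lemma isHermitian_blochState : (blochState x y z).IsHermitian := by
  ext i j
  fin_cases i <;> fin_cases j <;> simp [blochState, Complex.ext_iff]

lemma trace_blochState : (blochState x y z).trace = 1 := by
  rw [blochState, trace_smul, trace_fin_two_of]
  ring

lemma det_blochState : (blochState x y z).det = ((1 - (x ^ 2 + y ^ 2 + z ^ 2)) / 4 : ℝ) := by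
  rw [blochState, det_smul, det_fin_two_of, Fintype.card_fin]
  push_cast
  linear_combination ((y : ℂ) ^ 2 / 4) * I_sq

lemma trace_blochState_mul (x' y' z' : ℝ) :
    (blochState x y z * blochState x' y' z').trace = ((1 + x * x' + y * y' + z * z') / 2 : ℝ) := by
  rw [blochState, blochState, smul_mul_smul_comm, trace_smul, mul_fin_two, trace_fin_two_of]
  push_cast
  linear_combination (-(y * y' : ℂ) / 2) * I_sq

lemma reState_blochState : reState (blochState x y z) = blochState x 0 z := by
  ext i j
  fin_cases i <;> fin_cases j <;> simp [blochState, reState, mconj, Complex.ext_iff] <;> ring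

end Bloch

lemma posSemidef_blochState {x y z : ℝ} (h : x ^ 2 + y ^ 2 + z ^ 2 ≤ 1) :
    (blochState x y z).PosSemidef := by
  refine (isHermitian_blochState x y z).posSemidef_of_trace_nonneg_of_det_nonneg_fin_two ?_ ?_
  · rw [trace_blochState]; exact zero_le_one
  · rw [det_blochState, zero_le_real]; linarith

theorem stmt6 (rx ry rz : ℝ) (hr : rx ^ 2 + ry ^ 2 + rz ^ 2 ≤ 1) :
    MRe (((1:ℂ)/2) • !![1 + (rz:ℂ), (rx:ℂ) - Complex.I * (ry:ℂ); (rx:ℂ) + Complex.I * (ry:ℂ), 1 - (rz:ℂ)] : Matrix (Fin 2) (Fin 2) ℂ) =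
      1 - Real.sqrt ((Real.sqrt ((1 - (rx ^ 2 + ry ^ 2 + rz ^ 2)) *
          (1 - (rx ^ 2 + ry ^ 2 + rz ^ 2) + ry ^ 2)) +
        1 + (rx ^ 2 + ry ^ 2 + rz ^ 2) - ry ^ 2) / 2) := by
  change MRe (blochState rx ry rz) = _
  have hσ : (blochState rx 0 rz).PosSemidef := posSemidef_blochState (by nlinarith)
  rw [MRe, reState_blochState, fidelity_fin_two (posSemidef_blochState hr) hσ,
    trace_blochState_mul, det_mul, det_blochState, det_blochState, ← ofReal_mul, ofReal_re,
    ofReal_re, div_mul_div_comm, Real.sqrt_div' _ (by norm_num : (0:ℝ) ≤ 4 * 4),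
    Real.sqrt_mul_self (by norm_num : (0:ℝ) ≤ 4)]
  ring_nf
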